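/- arXiv:1711.01787 — 6 statements merged into one kernel-verified Lean document; each statement's English description precedes it below -/
import Mathlib

section
/- If K ⊆ L are convex bodies in R^n in John's position, then L ⊆ -nK. -/
/-!
Every `x ∈ L` satisfies `⟪x, vᵢ⟫ ≤ 1`, since `vᵢ ∈ L°`. Applying the decomposition of the
identity to `x` and subtracting it from `∑ aᵢ uᵢ = 0` gives `-x = ∑ aᵢ (1 - ⟪x, vᵢ⟫) uᵢ`, a
combination of the contact points `uᵢ ∈ K` with nonnegative coefficients. Their sum is
`∑ aᵢ = n`, because `∑ aᵢ vᵢ = 0` and, taking traces in the decomposition of the identity,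
`∑ aᵢ ⟪uᵢ, vᵢ⟫ = n`. Hence `-x ∈ n • K` by convexity of `K`.
-/

open Pointwise

noncomputable section

/-- Euclidean space ℝⁿ. -/
abbrev E (n : ℕ) := EuclideanSpace ℝ (Fin n)

/-- A convex body: compact, convex, with nonempty interior. -/
def IsConvexBody {n : ℕ} (K : Set (E n)) : Prop :=
  IsCompact K ∧ Convex ℝ K ∧ (interior K).Nonempty

/-- The polar body `K° = {x : ⟨x, y⟩ ≤ 1 for all y ∈ K}`. -/
def polarBody {n : ℕ} (K : Set (E n)) : Set (E n) :=
  {x | ∀ y ∈ K, (inner ℝ x y : ℝ) ≤ 1}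

/-- The Banach-Mazur distance:
`inf {r > 0 : K + u ⊆ T(L + v) ⊆ r(K + u)}` over invertible linear `T` and
translations `u, v`. -/
def bmDist {n : ℕ} (K L : Set (E n)) : ℝ :=
  sInf {r : ℝ | 0 < r ∧ ∃ (T : E n ≃ₗ[ℝ] E n) (u v : E n),
    (u +ᵥ K) ⊆ (T : E n →ₗ[ℝ] E n) '' (v +ᵥ L) ∧
    (T : E n →ₗ[ℝ] E n) '' (v +ᵥ L) ⊆ r • (u +ᵥ K)}

/-- The Grünbaum distance: `inf |r|` over nondegenerate affine images
`K'` of `K` and `L'` of `L` with `K' ⊆ L' ⊆ r • K'` (`r` possibly negative). -/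
def grDist {n : ℕ} (K L : Set (E n)) : ℝ :=
  sInf {s : ℝ | ∃ (r : ℝ) (F G : E n ≃ᵃ[ℝ] E n), s = |r| ∧
    (F : E n → E n) '' K ⊆ (G : E n → E n) '' L ∧
    (G : E n → E n) '' L ⊆ r • ((F : E n → E n) '' K)}

/-- The conditions of John's decomposition for given contact pairs
`(u i, v i)` and weights `a i`. -/
def IsJohnData {n : ℕ} (K L : Set (E n)) {m : ℕ}
    (u v : Fin m → E n) (a : Fin m → ℝ) : Prop :=
  (∀ i, u i ∈ frontier K ∩ frontier L) ∧
  (∀ i, v i ∈ frontier (polarBody K) ∩ frontier (polarBody L)) ∧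
  (∀ i, 0 < a i) ∧
  (∀ x : E n, x = ∑ i, (a i * (inner ℝ x (v i) : ℝ)) • u i) ∧
  (∑ i, a i • u i = 0) ∧
  (∑ i, a i • v i = 0) ∧
  (∀ i, (inner ℝ (u i) (v i) : ℝ) = 1)

/-- `K ⊆ L` are in John's position. -/
def IsJohnPosition {n : ℕ} (K L : Set (E n)) : Prop :=
  K ⊆ L ∧ ∃ (m : ℕ), 0 < m ∧ ∃ (u v : Fin m → E n) (a : Fin m → ℝ),
    IsJohnData K L u v a

/-- A triangle in the plane: the convex hull of three affinely
independent points. -/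
def IsTriangle (K : Set (E 2)) : Prop :=
  ∃ p : Fin 3 → E 2, AffineIndependent ℝ p ∧ K = convexHull ℝ (Set.range p)

/-- A centrally symmetric set, with center `c`. -/
def IsCentrallySymmetric {n : ℕ} (L : Set (E n)) : Prop :=
  ∃ c : E n, ∀ x, x ∈ L ↔ (2 : ℝ) • c - x ∈ L

open Finset RealInnerProductSpace

section Decomposition

variable {F : Type*} [NormedAddCommGroup F] [InnerProductSpace ℝ F]
  {ι : Type*} [Fintype ι] {u v : ι → F} {a : ι → ℝ}

theorem sum_mul_inner_eq_finrank [FiniteDimensional ℝ F]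
    (hdec : ∀ x : F, x = ∑ i, (a i * ⟪x, v i⟫) • u i) :
    ∑ i, a i * ⟪u i, v i⟫ = Module.finrank ℝ F := by
  have hid : (1 : F →ₗ[ℝ] F) = ∑ i, a i • (innerSL ℝ (v i) : F →ₗ[ℝ] ℝ).smulRight (u i) := by
    ext x
    conv_lhs => rw [Module.End.one_apply, hdec x]
    simp [mul_smul, real_inner_comm]
  rw [← LinearMap.trace_one, hid, map_sum]
  simp [LinearMap.trace_smulRight, real_inner_comm]

theorem neg_eq_sum_smul_of_decomposition (hdec : ∀ x : F, x = ∑ i, (a i * ⟪x, v i⟫) • u i)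
    (hsu : ∑ i, a i • u i = 0) (x : F) :
    -x = ∑ i, (a i * (1 - ⟪x, v i⟫)) • u i := by
  simp only [mul_sub, mul_one, sub_smul, sum_sub_distrib, hsu, ← hdec x, zero_sub]

theorem sum_mul_one_sub_inner (hsv : ∑ i, a i • v i = 0) (x : F) :
    ∑ i, a i * (1 - ⟪x, v i⟫) = ∑ i, a i := by
  have hzero : ∑ i, a i * ⟪x, v i⟫ = 0 := by
    simpa [inner_sum, real_inner_smul_right] using congrArg (⟪x, ·⟫) hsv
  simp only [mul_sub, mul_one, sum_sub_distrib, hzero, sub_zero]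

end Decomposition

theorem Convex.sum_smul_mem_smul {F : Type*} [AddCommGroup F] [Module ℝ F] {K : Set F}
    (hK : Convex ℝ K) {ι : Type*} [Fintype ι] {c : ι → ℝ} {u : ι → F}
    (hc : ∀ i, 0 ≤ c i) (hpos : 0 < ∑ i, c i) (hu : ∀ i, u i ∈ K) :
    ∑ i, c i • u i ∈ (∑ i, c i) • K := by
  refine Set.mem_smul_set.2 ⟨∑ i, (c i / ∑ j, c j) • u i, ?_, ?_⟩
  · refine hK.sum_mem (fun i _ => div_nonneg (hc i) hpos.le) ?_ fun i _ => hu i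
    rw [← sum_div, div_self hpos.ne']
  · simp only [smul_sum, smul_smul, mul_div_cancel₀ _ hpos.ne']

theorem isClosed_polarBody {n : ℕ} (L : Set (E n)) : IsClosed (polarBody L) := by
  have hpolar : polarBody L = ⋂ y ∈ L, {x : E n | ⟪x, y⟫ ≤ 1} := by
    ext x
    simp [polarBody]
  rw [hpolar]
  exact isClosed_biInter fun y _ => isClosed_le (continuous_id.inner continuous_const)
    continuous_const

theorem stmt2_general (n : ℕ) (K L : Set (E n)) (hK : IsConvexBody K)
    (hJ : IsJohnPosition K L) :
    L ⊆ (-(n : ℝ)) • K := by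
  obtain ⟨-, m, hm, u, v, a, hu, hv, ha, hdec, hsu, hsv, huv⟩ := hJ
  have huK : ∀ i, u i ∈ K := fun i => hK.1.isClosed.frontier_subset (hu i).1
  have hvL : ∀ i, v i ∈ polarBody L := fun i => (isClosed_polarBody L).frontier_subset (hv i).2
  have htrace : ∑ i, a i = n := by
    simpa [huv, finrank_euclideanSpace_fin] using sum_mul_inner_eq_finrank hdec
  have hn : 0 < (n : ℝ) := htrace ▸ sum_pos (fun i _ => ha i) ⟨⟨0, hm⟩, mem_univ _⟩
  intro x hx
  have hc : ∀ i, 0 ≤ a i * (1 - ⟪x, v i⟫) := fun i =>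
    mul_nonneg (ha i).le (sub_nonneg.2 (real_inner_comm x (v i) ▸ hvL i x hx))
  have hsum : ∑ i, a i * (1 - ⟪x, v i⟫) = n := (sum_mul_one_sub_inner hsv x).trans htrace
  have hnegx := hK.2.1.sum_smul_mem_smul hc (hsum ▸ hn) huK
  rw [hsum, ← neg_eq_sum_smul_of_decomposition hdec hsu x] at hnegx
  rw [← neg_neg x, Set.neg_smul_set]
  exact Set.neg_mem_neg.2 hnegx

/-- If `K ⊆ L` are convex bodies in `ℝⁿ` in John's position, then
`L ⊆ -n • K`. -/
theorem stmt2 (n : ℕ) (K L : Set (E n)) (hK : IsConvexBody K)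
    (hL : IsConvexBody L) (hJ : IsJohnPosition K L) :
    L ⊆ (-(n : ℝ)) • K :=
  stmt2_general n K L hK hJ
end
end

section
/- If K ⊆ L are convex bodies in R^n in John's position with exactly n+1 contact pairs (u_i, v_i) and weights a_i, then all weights equal n/(n+1) and ⟨u_i, v_j⟩ = -1/n for all i ≠ j. -/
open Pointwise

noncomputable section

/-! Since the `uᵢ` span `ℝⁿ`, the map `c ↦ ∑ cᵢ uᵢ` from `ℝⁿ⁺¹` onto `ℝⁿ` has a one-dimensional
kernel, spanned by the weight vector `a`. John's decomposition at `x = uⱼ` puts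
`(aᵢ ⟨uⱼ, vᵢ⟩ - δᵢⱼ)ᵢ` into that kernel, so it equals `t • a`. Summing over `i` and using
`∑ aᵢ vᵢ = 0` gives `t = -1/s` with `s = ∑ aᵢ`; hence `⟨uⱼ, vᵢ⟩ = -1/s` for `i ≠ j` and
`aⱼ = s/(s+1)` for all `j`, and summing the latter over the `n + 1` indices forces `s = n`. -/

open Finset
open scoped InnerProductSpace

theorem Fintype.ker_linearCombination_eq_span_singleton {K V ι : Type*} [Field K]
    [AddCommGroup V] [Module K V] [FiniteDimensional K V] [Fintype ι] {u : ι → V}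
    (hspan : Submodule.span K (Set.range u) = ⊤)
    (hcard : Fintype.card ι = Module.finrank K V + 1) {a : ι → K} (ha : a ≠ 0)
    (hau : ∑ i, a i • u i = 0) :
    LinearMap.ker (Fintype.linearCombination K u) = Submodule.span K {a} := by
  set f := Fintype.linearCombination K u
  have hker : Module.finrank K (LinearMap.ker f) = 1 := by
    have := LinearMap.finrank_range_add_finrank_ker f
    rw [Fintype.range_linearCombination, hspan, finrank_top, Module.finrank_fintype_fun_eq_card,
      hcard] at this
    omega
  refine (Submodule.eq_of_le_of_finrank_le ?_ ?_).symm
  · rwa [Submodule.span_singleton_le_iff_mem, LinearMap.mem_ker, Fintype.linearCombination_apply]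
  · rw [hker, finrank_span_singleton ha]

theorem sum_add_one_eq_card_of_forall_eq_div {ι : Type*} [Fintype ι] {a : ι → ℝ}
    (hs : 0 < ∑ i, a i) (ha : ∀ i, a i = (∑ i, a i) / (∑ i, a i + 1)) :
    ∑ i, a i + 1 = Fintype.card ι := by
  set s := ∑ i, a i
  have hsum : s = Fintype.card ι * (s / (s + 1)) := by
    conv_lhs => rw [show s = ∑ i, a i from rfl, Fintype.sum_congr _ _ ha]
    rw [sum_const, card_univ, nsmul_eq_mul]
  field_simp at hsum
  nlinarith

section JohnDecomposition

variable {ι V : Type*} [Fintype ι] [NormedAddCommGroup V] [InnerProductSpace ℝ V]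
  {u v : ι → V} {a : ι → ℝ}

theorem exists_mul_inner_sub_single_eq_smul [DecidableEq ι] [FiniteDimensional ℝ V]
    (hspan : Submodule.span ℝ (Set.range u) = ⊤)
    (hcard : Fintype.card ι = Module.finrank ℝ V + 1) (ha : a ≠ 0)
    (hau : ∑ i, a i • u i = 0) (hdec : ∀ x, x = ∑ i, (a i * ⟪x, v i⟫_ℝ) • u i) (j : ι) :
    ∃ t : ℝ, t • a = (fun i => a i * ⟪u j, v i⟫_ℝ) - Pi.single j 1 := by
  rw [← Submodule.mem_span_singleton,
    ← Fintype.ker_linearCombination_eq_span_singleton hspan hcard ha hau, LinearMap.mem_ker,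
    map_sub, Fintype.linearCombination_apply_single, one_smul, Fintype.linearCombination_apply,
    ← hdec, sub_self]

theorem sum_mul_inner_eq_zero (hav : ∑ i, a i • v i = 0) (x : V) :
    ∑ i, a i * ⟪x, v i⟫_ℝ = 0 := by
  simp_rw [← real_inner_smul_right, ← inner_sum, hav, inner_zero_right]

theorem weight_eq_and_inner_eq_of_smul_eq [DecidableEq ι] (hpos : ∀ i, 0 < a i)
    (hav : ∑ i, a i • v i = 0) {j : ι} (huv : ⟪u j, v j⟫_ℝ = 1) {t : ℝ}
    (ht : t • a = (fun i => a i * ⟪u j, v i⟫_ℝ) - Pi.single j 1) :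
    a j = (∑ i, a i) / (∑ i, a i + 1) ∧ ∀ i ≠ j, ⟪u j, v i⟫_ℝ = -(1 / ∑ i, a i) := by
  have hs : 0 < ∑ i, a i := sum_pos (fun i _ => hpos i) ⟨j, mem_univ j⟩
  have hts : t * ∑ i, a i = -1 := by
    have := congrArg (fun c => ∑ i, c i) ht
    simpa [mul_sum, sum_sub_distrib, sum_mul_inner_eq_zero hav] using this
  have ht' : t = -(1 / ∑ i, a i) := by
    field_simp
    linarith
  refine ⟨?_, fun i hij => ?_⟩
  · have hj := congrFun ht j
    simp only [Pi.smul_apply, smul_eq_mul, Pi.sub_apply, huv, Pi.single_eq_same, mul_one] at hj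
    rw [ht'] at hj
    field_simp at hj ⊢
    linarith
  · have hi := congrFun ht i
    simp only [Pi.smul_apply, smul_eq_mul, Pi.sub_apply, Pi.single_eq_of_ne hij, sub_zero] at hi
    rw [← ht']
    exact (mul_right_cancel₀ (hpos i).ne' (hi.trans (mul_comm _ _))).symm

theorem weight_eq_and_inner_eq_of_card_eq_finrank_add_one [FiniteDimensional ℝ V]
    (hspan : Submodule.span ℝ (Set.range u) = ⊤)
    (hcard : Fintype.card ι = Module.finrank ℝ V + 1) (hpos : ∀ i, 0 < a i)
    (hdec : ∀ x, x = ∑ i, (a i * ⟪x, v i⟫_ℝ) • u i) (hau : ∑ i, a i • u i = 0)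
    (hav : ∑ i, a i • v i = 0) (huv : ∀ i, ⟪u i, v i⟫_ℝ = 1) :
    (∀ i, a i = (Module.finrank ℝ V : ℝ) / (Module.finrank ℝ V + 1)) ∧
      ∀ i j, i ≠ j → ⟪u i, v j⟫_ℝ = -(1 / (Module.finrank ℝ V : ℝ)) := by
  classical
  obtain ⟨i₀⟩ : Nonempty ι := Fintype.card_pos_iff.mp (by omega)
  have ha : a ≠ 0 := fun h => (hpos i₀).ne' (congrFun h i₀)
  have hs : 0 < ∑ i, a i := sum_pos (fun i _ => hpos i) ⟨i₀, mem_univ i₀⟩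
  have key (j : ι) :
      a j = (∑ i, a i) / (∑ i, a i + 1) ∧ ∀ i ≠ j, ⟪u j, v i⟫_ℝ = -(1 / ∑ i, a i) := by
    obtain ⟨t, ht⟩ := exists_mul_inner_sub_single_eq_smul hspan hcard ha hau hdec j
    exact weight_eq_and_inner_eq_of_smul_eq hpos hav (huv j) ht
  have hsum : ∑ i, a i = Module.finrank ℝ V := by
    have := sum_add_one_eq_card_of_forall_eq_div hs fun i => (key i).1
    rw [hcard] at this
    push_cast at this
    linarith
  exact ⟨fun i => by rw [(key i).1, hsum], fun i j hij => by rw [(key i).2 j hij.symm, hsum]⟩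

end JohnDecomposition

theorem stmt4_general (n : ℕ) (K L : Set (E n))
    (u v : Fin (n + 1) → E n) (a : Fin (n + 1) → ℝ)
    (hJ : IsJohnData K L u v a)
    (hspan : Submodule.span ℝ (Set.range u) = ⊤) :
    (∀ i, a i = (n : ℝ) / (n + 1)) ∧
      (∀ i j, i ≠ j → (inner ℝ (u i) (v j) : ℝ) = -(1 / (n : ℝ))) := by
  obtain ⟨-, -, hpos, hdec, hau, hav, huv⟩ := hJ
  simpa only [finrank_euclideanSpace_fin] using
    weight_eq_and_inner_eq_of_card_eq_finrank_add_one hspan (by simp) hpos hdec hau hav huv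

/-- If `K ⊆ L` are convex bodies in `ℝⁿ` in John's position with exactly
`n + 1` contact pairs spanning `ℝⁿ`, then all weights equal `n / (n + 1)`
and `⟨u i, v j⟩ = -1/n` for `i ≠ j`. -/
theorem stmt4 (n : ℕ) (K L : Set (E n)) (hK : IsConvexBody K)
    (hL : IsConvexBody L) (hKL : K ⊆ L)
    (u v : Fin (n + 1) → E n) (a : Fin (n + 1) → ℝ)
    (hJ : IsJohnData K L u v a)
    (hspan : Submodule.span ℝ (Set.range u) = ⊤) :
    (∀ i, a i = (n : ℝ) / (n + 1)) ∧
      (∀ i j, i ≠ j → (inner ℝ (u i) (v j) : ℝ) = -(1 / (n : ℝ))) :=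
  stmt4_general n K L u v a hJ hspan
end
end

section
/- Let K ⊆ L be convex bodies in R^n with 0 in the interior of L, such that K is not contained in rL + v for any 0 < r < 1 and v ∈ R^n. Then 0 lies in the convex hull of ∂K° ∩ ∂L°. -/
open Pointwise

noncomputable section

/-!
Write `h_K` for the support function, so that `K° = {h_K ≤ 1}` and `∂L° = {h_L = 1}`, a compact
set since `0 ∈ int L`. If `0` were not in the convex hull of the compact contact set
`∂K° ∩ ∂L°`, some `v` would satisfy `⟪x, v⟫ > 0` on it. On `∂L°` we have `h_K ≤ 1`, with
equality only at contact points, so compactness gives `t > 0` and `r < 1` with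
`h_K(x) - t ⟪x, v⟫ ≤ r` on `∂L°`. By homogeneity this says `h_{K - t v} ≤ r h_L` everywhere,
i.e. `K ⊆ t v + r L`, contradicting minimality.
-/

open scoped RealInnerProductSpace

section CompactConvexHull

variable {F : Type*} [NormedAddCommGroup F] [NormedSpace ℝ F] [FiniteDimensional ℝ F]

/-- By Carathéodory, `convexHull ℝ s` is the finite union over `k ≤ finrank ℝ F + 1` of the
continuous images of `stdSimplex ℝ (Fin k) × s ^ k`. -/
theorem isCompact_convexHull {s : Set F} (hs : IsCompact s) : IsCompact (convexHull ℝ s) := by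
  let A : ℕ → Set F := fun k => (fun p : (Fin k → ℝ) × (Fin k → F) => ∑ i, p.1 i • p.2 i) ''
    (stdSimplex ℝ (Fin k) ×ˢ Set.univ.pi fun _ => s)
  have hA : ∀ k, IsCompact (A k) := fun k =>
    ((isCompact_stdSimplex ℝ (Fin k)).prod (isCompact_univ_pi fun _ => hs)).image (by fun_prop)
  suffices convexHull ℝ s = ⋃ k ∈ Finset.range (Module.finrank ℝ F + 2), A k by
    rw [this]
    exact Finset.isCompact_biUnion _ fun k _ => hA k
  apply subset_antisymm
  · intro x hx
    obtain ⟨ι, _, z, w, hzs, hz, hw0, hw1, rfl⟩ := eq_pos_convex_span_of_mem_convexHull hx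
    have hcard : Fintype.card ι < Module.finrank ℝ F + 2 :=
      Nat.lt_succ_of_le (hz.card_le_finrank_succ.trans (by grw [Submodule.finrank_le]))
    let e := Fintype.equivFin ι
    refine Set.mem_biUnion (Finset.mem_range.2 hcard) ⟨(w ∘ e.symm, z ∘ e.symm), ⟨⟨?_, ?_⟩, ?_⟩, ?_⟩
    · exact fun i => (hw0 _).le
    · rwa [Function.comp_def, e.symm.sum_comp w]
    · exact fun i _ => hzs ⟨_, rfl⟩
    · exact e.symm.sum_comp fun i => w i • z i
  · simp only [Set.iUnion_subset_iff]
    rintro k - _ ⟨⟨w, p⟩, ⟨hw, hp⟩, rfl⟩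
    exact (convex_convexHull ℝ s).sum_mem (fun i _ => hw.1 i) hw.2
      fun i _ => subset_convexHull ℝ s (hp i trivial)

end CompactConvexHull

section SupportFunction

variable {F : Type*} [NormedAddCommGroup F] [InnerProductSpace ℝ F] {K L : Set F} {x y : F}

/-- The support function `h_K(x) = sup_{y ∈ K} ⟪x, y⟫`; it is `0` when `K` is empty. -/
def supportFun (K : Set F) (x : F) : ℝ := sSup ((⟪x, ·⟫) '' K)

theorem le_supportFun (hK : Bornology.IsBounded K) (hy : y ∈ K) : ⟪x, y⟫ ≤ supportFun K x := by
  obtain ⟨R, hR⟩ := hK.exists_norm_le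
  refine le_csSup ⟨‖x‖ * R, ?_⟩ ⟨y, hy, rfl⟩
  rintro _ ⟨z, hz, rfl⟩
  exact (real_inner_le_norm x z).trans (by gcongr; exact hR z hz)

theorem supportFun_le (hK : K.Nonempty) {c : ℝ} (h : ∀ y ∈ K, ⟪x, y⟫ ≤ c) :
    supportFun K x ≤ c :=
  csSup_le (hK.image _) (Set.forall_mem_image.2 h)

theorem supportFun_mono (hL : Bornology.IsBounded L) (hK : K.Nonempty) (hKL : K ⊆ L) (x : F) :
    supportFun K x ≤ supportFun L x :=
  supportFun_le hK fun _ hy => le_supportFun hL (hKL hy)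

theorem supportFun_smul {c : ℝ} (hc : 0 ≤ c) (K : Set F) (x : F) :
    supportFun K (c • x) = c * supportFun K x := by
  rw [supportFun, supportFun, ← smul_eq_mul, ← Real.sSup_smul_of_nonneg hc, ← Set.image_smul,
    Set.image_image]
  simp_rw [real_inner_smul_left, smul_eq_mul]

theorem supportFun_zero (K : Set F) : supportFun K 0 = 0 := by
  simpa using supportFun_smul le_rfl K (0 : F)

theorem supportFun_smul_set (c : ℝ) (K : Set F) (x : F) :
    supportFun (c • K) x = supportFun K (c • x) := by
  rw [supportFun, supportFun, ← Set.image_smul, Set.image_image]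
  simp_rw [real_inner_smul_left, real_inner_smul_right]

theorem lipschitzWith_supportFun {R : NNReal} (hK : K.Nonempty) (hR : ∀ y ∈ K, ‖y‖ ≤ R) :
    LipschitzWith R (supportFun K) := by
  have hKb : Bornology.IsBounded K := isBounded_iff_forall_norm_le.2 ⟨R, hR⟩
  refine LipschitzWith.of_le_add_mul R fun a b => supportFun_le hK fun y hy => ?_
  calc ⟪a, y⟫ = ⟪b, y⟫ + ⟪a - b, y⟫ := by rw [← inner_add_left, add_sub_cancel]
    _ ≤ supportFun K b + ‖a - b‖ * R := by
        gcongr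
        · exact le_supportFun hKb hy
        · exact (real_inner_le_norm _ _).trans (by gcongr; exact hR y hy)
    _ = supportFun K b + R * dist a b := by rw [dist_eq_norm, mul_comm]

theorem continuous_supportFun (hK : Bornology.IsBounded K) (hne : K.Nonempty) :
    Continuous (supportFun K) := by
  obtain ⟨R, hR⟩ := hK.exists_norm_le
  exact (lipschitzWith_supportFun (R := R.toNNReal) hne fun y hy =>
    (hR y hy).trans (Real.le_coe_toNNReal R)).continuous

theorem mul_norm_le_supportFun (hL : Bornology.IsBounded L) {ε : ℝ} (hε : 0 ≤ ε)
    (hball : Metric.closedBall 0 ε ⊆ L) (x : F) : ε * ‖x‖ ≤ supportFun L x := by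
  rcases eq_or_ne x 0 with rfl | hx
  · simpa using le_supportFun (x := 0) hL (hball (Metric.mem_closedBall_self hε))
  have hx' : 0 < ‖x‖ := norm_pos_iff.2 hx
  have hmem : (ε / ‖x‖) • x ∈ L := hball <| by
    rw [mem_closedBall_zero_iff, norm_smul, Real.norm_of_nonneg (by positivity),
      div_mul_cancel₀ _ hx'.ne']
  calc ε * ‖x‖ = ⟪x, (ε / ‖x‖) • x⟫ := by
        rw [real_inner_smul_right, real_inner_self_eq_norm_sq]; field_simp
    _ ≤ supportFun L x := le_supportFun hL hmem

theorem mem_of_forall_inner_le_supportFun [CompleteSpace F] {A : Set F} (hAc : Convex ℝ A)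
    (hAcl : IsClosed A) (hA : A.Nonempty) {z : F} (h : ∀ w, ⟪w, z⟫ ≤ supportFun A w) : z ∈ A := by
  by_contra hz
  obtain ⟨f, u, hfA, hfz⟩ := geometric_hahn_banach_closed_point hAc hAcl hz
  set w := (InnerProductSpace.toDual ℝ F).symm f
  have hw : ∀ y, ⟪w, y⟫ = f y := fun y => InnerProductSpace.toDual_symm_apply
  have : supportFun A w ≤ u := supportFun_le hA fun y hy => (hw y ▸ hfA y hy).le
  linarith [h w, hw z]

end SupportFunction

/-- Points `c • x` with `c > 1` leave `{f ≤ 1}`, so no point of `{f = 1}` is interior. -/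
theorem frontier_setOf_le_one {V : Type*} [AddCommGroup V] [Module ℝ V] [TopologicalSpace V]
    [ContinuousSMul ℝ V] {f : V → ℝ} (hf : Continuous f)
    (hhom : ∀ c : ℝ, 0 ≤ c → ∀ x, f (c • x) = c * f x) :
    frontier {x | f x ≤ 1} = {x | f x = 1} := by
  refine (frontier_le_subset_eq hf continuous_const).antisymm fun x (hx : f x = 1) => ?_
  rw [frontier_eq_closure_inter_closure]
  refine ⟨subset_closure hx.le, mem_closure_of_tendsto (f := fun c : ℝ => c • x)
    (b := nhdsWithin 1 (Set.Ioi 1)) ?_ ?_⟩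
  · simpa using (tendsto_nhdsWithin_of_tendsto_nhds (a := (1 : ℝ)) (s := Set.Ioi 1)
      Filter.tendsto_id).smul_const x
  · filter_upwards [self_mem_nhdsWithin] with c (hc : 1 < c)
    simp [hhom c (by linarith), hx, hc]

theorem IsCompact.exists_forall_le_of_forall_lt {X : Type*} [TopologicalSpace X] {C : Set X}
    (hC : IsCompact C) {f : X → ℝ} (hf : ContinuousOn f C) {a : ℝ} (h : ∀ x ∈ C, f x < a) :
    ∃ b < a, ∀ x ∈ C, f x ≤ b := by
  rcases C.eq_empty_or_nonempty with rfl | hne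
  · exact ⟨a - 1, by linarith, by simp⟩
  · obtain ⟨x, hx, hmax⟩ := hC.exists_isMaxOn hne hf
    exact ⟨f x, h x hx, fun y hy => hmax hy⟩

/-- Where `g ≤ 0`, compactness keeps `f` below some `m < 1`, and a small `t` keeps
`t |g| < 1 - m`. -/
theorem IsCompact.exists_pos_forall_sub_mul_lt_one {X : Type*} [TopologicalSpace X] {C : Set X}
    (hC : IsCompact C) {f g : X → ℝ} (hf : Continuous f) (hg : Continuous g)
    (hf1 : ∀ x ∈ C, f x ≤ 1) (hfg : ∀ x ∈ C, f x = 1 → 0 < g x) :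
    ∃ t > 0, ∀ x ∈ C, f x - t * g x < 1 := by
  have hD : IsCompact (C ∩ {x | g x ≤ 0}) := hC.inter_right (isClosed_le hg continuous_const)
  obtain ⟨m, hm, hfm⟩ := hD.exists_forall_le_of_forall_lt hf.continuousOn
    fun x ⟨hxC, (hgx : g x ≤ 0)⟩ => (hf1 x hxC).lt_of_ne fun h => (hfg x hxC h).not_ge hgx
  obtain ⟨M, hM⟩ := hC.exists_bound_of_continuousOn hg.continuousOn
  set t := (1 - m) / (|M| + 1)
  have ht : 0 < t := div_pos (sub_pos.2 hm) (by positivity)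
  have htM : t * |M| < 1 - m := by
    rw [div_mul_eq_mul_div, div_lt_iff₀ (by positivity)]
    nlinarith [abs_nonneg M]
  refine ⟨t, ht, fun x hx => ?_⟩
  rcases lt_or_ge 0 (g x) with hgx | hgx
  · linarith [hf1 x hx, mul_pos ht hgx]
  · have hgM : -g x ≤ |M| := (neg_le_abs _).trans ((Real.norm_eq_abs (g x) ▸ hM x hx).trans
      (le_abs_self M))
    linarith [hfm x ⟨hx, hgx⟩, mul_le_mul_of_nonneg_left hgM ht.le]

theorem exists_forall_inner_pos_of_zero_notMem_convexHull {F : Type*} [NormedAddCommGroup F]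
    [InnerProductSpace ℝ F] [FiniteDimensional ℝ F] {S : Set F} (hS : IsCompact S)
    (h : (0 : F) ∉ convexHull ℝ S) : ∃ v : F, ∀ x ∈ S, 0 < ⟪x, v⟫ := by
  obtain ⟨f, u, hf0, hfS⟩ :=
    geometric_hahn_banach_point_closed (convex_convexHull ℝ S) (isCompact_convexHull hS).isClosed h
  refine ⟨(InnerProductSpace.toDual ℝ F).symm f, fun x hx => ?_⟩
  rw [real_inner_comm, InnerProductSpace.toDual_symm_apply]
  linarith [map_zero f, hfS x (subset_convexHull ℝ S hx)]

section PolarBody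

variable {n : ℕ} {K L : Set (E n)}

theorem polarBody_eq_setOf_supportFun_le (hK : Bornology.IsBounded K) (hne : K.Nonempty) :
    polarBody K = {x | supportFun K x ≤ 1} :=
  Set.ext fun _ => ⟨supportFun_le hne, fun h _ hy => (le_supportFun hK hy).trans h⟩

theorem frontier_polarBody (hK : Bornology.IsBounded K) (hne : K.Nonempty) :
    frontier (polarBody K) = {x | supportFun K x = 1} := by
  rw [polarBody_eq_setOf_supportFun_le hK hne]
  exact frontier_setOf_le_one (continuous_supportFun hK hne) fun c hc => supportFun_smul hc K

theorem exists_closedBall_subset_of_zero_mem_interior (h0 : (0 : E n) ∈ interior L) :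
    ∃ ε > 0, Metric.closedBall 0 ε ⊆ L :=
  Metric.nhds_basis_closedBall.mem_iff.1 (mem_interior_iff_mem_nhds.1 h0)

theorem supportFun_pos (hL : Bornology.IsBounded L) (h0 : (0 : E n) ∈ interior L) {x : E n}
    (hx : x ≠ 0) : 0 < supportFun L x := by
  obtain ⟨ε, hε, hball⟩ := exists_closedBall_subset_of_zero_mem_interior h0
  exact (mul_pos hε (norm_pos_iff.2 hx)).trans_le (mul_norm_le_supportFun hL hε.le hball x)

theorem isBounded_polarBody (hL : Bornology.IsBounded L) (h0 : (0 : E n) ∈ interior L) :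
    Bornology.IsBounded (polarBody L) := by
  obtain ⟨ε, hε, hball⟩ := exists_closedBall_subset_of_zero_mem_interior h0
  refine isBounded_iff_forall_norm_le.2 ⟨ε⁻¹, fun x hx => ?_⟩
  have := (mul_norm_le_supportFun hL hε.le hball x).trans
    (supportFun_le ⟨0, interior_subset h0⟩ hx)
  rwa [← one_div, le_div_iff₀' hε]

theorem isCompact_frontier_polarBody (hL : Bornology.IsBounded L)
    (h0 : (0 : E n) ∈ interior L) : IsCompact (frontier (polarBody L)) :=
  Metric.isCompact_of_isClosed_isBounded isClosed_frontier
    ((isBounded_polarBody hL h0).closure.subset frontier_subset_closure)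

theorem subset_vadd_smul_of_forall_mem_frontier_polarBody (hL : IsCompact L) (hLc : Convex ℝ L)
    (h0 : (0 : E n) ∈ interior L) {A : Set (E n)} {a : E n} {r : ℝ} (hr : 0 ≤ r)
    (h : ∀ x ∈ frontier (polarBody L), ∀ z ∈ A, ⟪x, z - a⟫ ≤ r) : A ⊆ a +ᵥ r • L := by
  intro z hz
  rw [Set.mem_vadd_set_iff_neg_vadd_mem, vadd_eq_add, neg_add_eq_sub]
  have hLne : L.Nonempty := ⟨0, interior_subset h0⟩
  refine mem_of_forall_inner_le_supportFun (hLc.smul r) (hL.smul r).isClosed hLne.smul_set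
    fun w => ?_
  rw [supportFun_smul_set, supportFun_smul hr]
  rcases eq_or_ne w 0 with rfl | hw
  · simp [supportFun_zero]
  set c := supportFun L w
  have hc : 0 < c := supportFun_pos hL.isBounded h0 hw
  have hx : c⁻¹ • w ∈ frontier (polarBody L) := by
    rw [frontier_polarBody hL.isBounded hLne]
    exact (supportFun_smul (inv_nonneg.2 hc.le) L w).trans (inv_mul_cancel₀ hc.ne')
  have := h _ hx z hz
  rw [real_inner_smul_left, inv_mul_le_iff₀ hc] at this
  linarith

end PolarBody

/-- Let `K ⊆ L` be convex bodies in `ℝⁿ` with `0` in the interior of `L`,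
such that `K` is not contained in `r • L + v` for any `0 < r < 1` and
`v ∈ ℝⁿ`. Then `0` lies in the convex hull of `∂K° ∩ ∂L°`. -/
theorem stmt6 (n : ℕ) (K L : Set (E n)) (hK : IsConvexBody K)
    (hL : IsConvexBody L) (hKL : K ⊆ L) (h0 : (0 : E n) ∈ interior L)
    (hmin : ¬ ∃ (r : ℝ) (v : E n), 0 < r ∧ r < 1 ∧ K ⊆ v +ᵥ (r • L)) :
    (0 : E n) ∈ convexHull ℝ (frontier (polarBody K) ∩ frontier (polarBody L)) := by
  by_contra hcon
  have hKb := hK.1.isBounded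
  have hKne : K.Nonempty := hK.2.2.mono interior_subset
  have hC := isCompact_frontier_polarBody hL.1.isBounded h0
  obtain ⟨v, hv⟩ := exists_forall_inner_pos_of_zero_notMem_convexHull
    (hC.of_isClosed_subset (isClosed_frontier.inter isClosed_frontier) Set.inter_subset_right) hcon
  have hKC : ∀ x ∈ frontier (polarBody L), supportFun K x ≤ 1 := fun x hx => by
    rw [frontier_polarBody hL.1.isBounded ⟨0, interior_subset h0⟩] at hx
    exact hx ▸ supportFun_mono hL.1.isBounded hKne hKL x
  have hcontact : ∀ x ∈ frontier (polarBody L), supportFun K x = 1 → 0 < ⟪x, v⟫ :=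
    fun x hx h1 => hv x ⟨(frontier_polarBody hKb hKne).symm ▸ h1, hx⟩
  have hhK := continuous_supportFun hKb hKne
  have hvc : Continuous (⟪·, v⟫) := continuous_id.inner continuous_const
  obtain ⟨t, ht, htC⟩ := hC.exists_pos_forall_sub_mul_lt_one hhK hvc hKC hcontact
  obtain ⟨r, hr, hrC⟩ :=
    hC.exists_forall_le_of_forall_lt (hhK.sub (continuous_const.mul hvc)).continuousOn htC
  refine hmin ⟨max r (1 / 2), t • v, by positivity, max_lt hr (by norm_num),
    subset_vadd_smul_of_forall_mem_frontier_polarBody hL.1 hL.2.1 h0 (by positivity)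
      fun x hx z hz => ?_⟩
  calc ⟪x, z - t • v⟫ = ⟪x, z⟫ - t * ⟪x, v⟫ := by rw [inner_sub_right, real_inner_smul_right]
    _ ≤ supportFun K x - t * ⟪x, v⟫ := by grw [le_supportFun hKb hz]
    _ ≤ max r (1 / 2) := (hrC x hx).trans (le_max_left _ _)
end
end

section
/- For any symmetric convex body L in R^n and any simplex S in R^n, the Banach-Mazur distance satisfies d(L, S) = n. -/
open Pointwise

noncomputable section

open Set

/-!
Lower bound: if `L ⊆ Δ ⊆ r • L` for a simplex `Δ` and `L` symmetric about `c`, then for each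
vertex `qⱼ` the reflection `2c - qⱼ / r` of a point of `L` lies in `Δ`, so its `j`-th barycentric
coordinate `2λⱼ(c) - 1/r - (1 - 1/r) λⱼ(0)` is nonnegative; summing over the `n + 1` vertices
gives `n ≤ r`.

Upper bound: take a simplex of maximal volume with vertices `qⱼ` in `L`. Replacing one vertex by
a point `x ∈ L` does not increase the volume, so `|λⱼ(x)| ≤ 1`. With the symmetry this gives
`λⱼ(x) ≥ 2λⱼ(c) - 1`, i.e. `L ⊆ t + n • conv q` with `t = 2c - ∑ qᵢ`, while `conv q ⊆ L`.
A translation by `u` with `(n - 1) u = t` turns this into `u + L ⊆ n • (u + conv q) ⊆ n • (u + L)`;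
for `n = 1` such a `u` exists because then `L ⊆ t + L`, which forces `t = 0`.
-/

variable {ι : Type*}

theorem sum_smul_mem_sum_smul_convexHull {V : Type*} [AddCommGroup V] [Module ℝ V] [Fintype ι]
    [Nonempty ι] {w : ι → ℝ} (hw : ∀ i, 0 ≤ w i) (z : ι → V) :
    ∑ i, w i • z i ∈ (∑ i, w i) • convexHull ℝ (range z) := by
  rcases (Finset.sum_nonneg fun i _ => hw i).eq_or_lt with hzero | hpos
  · have hw0 : ∀ i, w i = 0 := fun i =>
      (Finset.sum_eq_zero_iff_of_nonneg fun i _ => hw i).1 hzero.symm i (Finset.mem_univ i)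
    rw [← hzero, zero_smul_set ((convexHull_nonempty_iff).2 (range_nonempty z))]
    simp [hw0]
  · refine ⟨Finset.univ.centerMass w z, Finset.univ.centerMass_mem_convexHull (fun i _ => hw i)
      hpos (fun i _ => mem_range_self i), ?_⟩
    exact smul_inv_smul₀ hpos.ne' _

theorem two_smul_sub_mem_vadd_set {V : Type*} [AddCommGroup V] [Module ℝ V] {L : Set V} {c : V}
    (hL : ∀ x ∈ L, (2 : ℝ) • c - x ∈ L) (u : V) :
    ∀ x ∈ u +ᵥ L, (2 : ℝ) • (u + c) - x ∈ u +ᵥ L := by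
  rintro _ ⟨x, hx, rfl⟩
  exact ⟨(2 : ℝ) • c - x, hL x hx, by simp only [vadd_eq_add]; module⟩

theorem eq_zero_of_subset_vadd {V : Type*} [NormedAddCommGroup V] [NormedSpace ℝ V] {L : Set V}
    (hLc : IsCompact L) (hL : L.Nonempty) {t : V} (h : L ⊆ t +ᵥ L) : t = 0 := by
  by_contra ht
  obtain ⟨g, -, hg⟩ := exists_dual_vector ℝ t (norm_ne_zero_iff.2 ht)
  obtain ⟨x, hx, hmin⟩ := hLc.exists_isMinOn hL g.continuous.continuousOn
  obtain ⟨y, hy, rfl⟩ := h hx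
  have : g (t +ᵥ y) ≤ g y := hmin hy
  rw [vadd_eq_add, map_add, hg] at this
  exact ht (norm_le_zero_iff.1 (by simpa using this))

namespace AffineMap

variable {V : Type*} [AddCommGroup V] [Module ℝ V]

theorem apply_two_smul_sub (f : V →ᵃ[ℝ] ℝ) (c x : V) :
    f ((2 : ℝ) • c - x) = 2 * f c - f x := by
  rw [AffineMap.decomp f]
  simp only [Pi.add_apply, map_sub, map_smul, smul_eq_mul]
  ring

theorem apply_smul (f : V →ᵃ[ℝ] ℝ) (a : ℝ) (x : V) : f (a • x) = a * f x + (1 - a) * f 0 := by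
  rw [AffineMap.decomp f]
  simp only [Pi.add_apply, map_smul, smul_eq_mul, map_zero]
  ring

end AffineMap

namespace AffineBasis

theorem exists_smul_vadd_eq {k V : Type*} [Ring k] [AddCommGroup V] [Module k V]
    (b b' : AffineBasis ι k V) : ∃ (T : V ≃ₗ[k] V) (v : V), T • (v +ᵥ b) = b' := by
  obtain ⟨i₀⟩ := b.nonempty
  let T := (b.basisOf i₀).equiv (b'.basisOf i₀) (Equiv.refl _)
  refine ⟨T, T.symm (b' i₀) - b i₀, AffineBasis.ext (funext fun j => ?_)⟩
  change T (T.symm (b' i₀) - b i₀ + b j) = b' j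
  rcases eq_or_ne j i₀ with rfl | hj
  · simp
  · have hT : T (b j - b i₀) = b' j - b' i₀ := by
      simpa [T] using (b.basisOf i₀).equiv_apply ⟨j, hj⟩ (b'.basisOf i₀) (Equiv.refl _)
    rw [sub_add_comm, map_add, hT, LinearEquiv.apply_symm_apply, sub_add_cancel]

theorem det_toMatrix_update {k V P : Type*} [Fintype ι] [DecidableEq ι] [CommRing k]
    [AddCommGroup V] [Module k V] [AddTorsor V P] (b b₂ : AffineBasis ι k P) (j : ι) (x : P) :
    (b.toMatrix (Function.update b₂ j x)).det = b₂.coord j x * (b.toMatrix b₂).det := by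
  have hrow : b.toMatrix (Function.update b₂ j x) =
      (b.toMatrix b₂).updateRow j (∑ i, b₂.coord i x • b.toMatrix b₂ i) := by
    rw [← Matrix.vecMul_eq_sum]
    ext i l
    rcases eq_or_ne i j with rfl | hij
    · simp [← coords_apply]
    · simp [hij]
  rw [hrow, Matrix.det_updateRow_sum, smul_eq_mul]

section Module

variable {V : Type*} [AddCommGroup V] [Module ℝ V]

theorem image_vadd_convexHull (T : V ≃ₗ[ℝ] V) (v : V) (b : AffineBasis ι ℝ V) :
    (T : V →ₗ[ℝ] V) '' (v +ᵥ convexHull ℝ (range b)) = convexHull ℝ (range ⇑(T • (v +ᵥ b))) := by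
  rw [← convexHull_vadd, LinearMap.image_convexHull, vadd_set_range, ← range_comp]
  rfl

variable [Fintype ι]

theorem card_le_add_one_of_subset_convexHull_subset_smul (b : AffineBasis ι ℝ V) {K : Set V}
    {c : V} (hK : ∀ x ∈ K, (2 : ℝ) • c - x ∈ K) (hKb : K ⊆ convexHull ℝ (range b)) {r : ℝ}
    (hr : 0 < r) (hbK : convexHull ℝ (range b) ⊆ r • K) : (Fintype.card ι : ℝ) ≤ r + 1 := by
  have hvertex : ∀ j, r⁻¹ + (1 - r⁻¹) * b.coord j 0 ≤ 2 * b.coord j c := by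
    intro j
    obtain ⟨x, hx, hbx⟩ := hbK (subset_convexHull ℝ _ (mem_range_self j))
    have hreflect := b.convexHull_eq_nonneg_coord ▸ hKb (hK x hx)
    have hx' : x = r⁻¹ • b j := by rw [← hbx, inv_smul_smul₀ hr.ne']
    have := hreflect j
    rw [AffineMap.apply_two_smul_sub, hx', AffineMap.apply_smul, coord_apply_eq] at this
    linarith
  have hsum := Finset.sum_le_sum fun j (_ : j ∈ Finset.univ) => hvertex j
  rw [Finset.sum_add_distrib, ← Finset.mul_sum, ← Finset.mul_sum, sum_coord_apply_eq_one,
    sum_coord_apply_eq_one, Finset.sum_const, Finset.card_univ, nsmul_eq_mul] at hsum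
  have : (Fintype.card ι - 1) * r⁻¹ ≤ 1 := by linarith
  rw [← div_eq_mul_inv, div_le_one hr] at this
  linarith

theorem subset_vadd_smul_convexHull (b : AffineBasis ι ℝ V) {L : Set V} {c : V}
    (hL : ∀ x ∈ L, (2 : ℝ) • c - x ∈ L) (hb : ∀ x ∈ L, ∀ j, b.coord j x ≤ 1) :
    L ⊆ ((2 : ℝ) • c - ∑ i, b i) +ᵥ ((Fintype.card ι - 1 : ℝ) • convexHull ℝ (range b)) := by
  intro x hx
  have := b.nonempty
  set a : ι → ℝ := fun j => b.coord j x + 1 - 2 * b.coord j c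
  have ha : ∀ j, 0 ≤ a j := fun j => by
    have := hb _ (hL x hx) j
    rw [AffineMap.apply_two_smul_sub] at this
    simp only [a]
    linarith
  have hsum : ∑ j, a j = Fintype.card ι - 1 := by
    simp only [a, Finset.sum_sub_distrib, Finset.sum_add_distrib, ← Finset.mul_sum,
      sum_coord_apply_eq_one, Finset.sum_const, Finset.card_univ, nsmul_eq_mul]
    ring
  have hcomb : ∑ j, a j • b j = x - ((2 : ℝ) • c - ∑ i, b i) := by
    simp only [a, add_smul, sub_smul, one_smul, mul_smul, Finset.sum_add_distrib,
      Finset.sum_sub_distrib, ← Finset.smul_sum, linear_combination_coord_eq_self]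
    abel
  refine ⟨x - ((2 : ℝ) • c - ∑ i, b i), ?_, by simp⟩
  rw [← hcomb, ← hsum]
  exact sum_smul_mem_sum_smul_convexHull ha b

end Module

section FiniteDimensional

variable [Fintype ι] {V : Type*} [NormedAddCommGroup V] [NormedSpace ℝ V] [FiniteDimensional ℝ V]

theorem exists_forall_mem_of_affineSpan_eq_top (b₀ : AffineBasis ι ℝ V) {L : Set V}
    (hL : affineSpan ℝ L = ⊤) : ∃ b : AffineBasis ι ℝ V, ∀ i, b i ∈ L := by
  obtain ⟨s, hsL, b, hb⟩ := exists_affine_subbasis hL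
  have : Fintype s := b.finite_set.fintype
  refine ⟨b.reindex (Fintype.equivOfCardEq ?_), fun i => ?_⟩
  · rw [b.card_eq_finrank_add_one, b₀.card_eq_finrank_add_one]
  · rw [reindex_apply, hb]
    exact hsL (Subtype.mem _)

theorem continuous_det_toMatrix [DecidableEq ι] (b₀ : AffineBasis ι ℝ V) :
    Continuous fun v : ι → V => (b₀.toMatrix v).det :=
  Continuous.matrix_det <| continuous_matrix fun i j =>
    (b₀.coord j).continuous_of_finiteDimensional.comp (continuous_apply i)

theorem exists_abs_coord_le_one (b₀ : AffineBasis ι ℝ V) {L : Set V} (hLc : IsCompact L)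
    (hL : affineSpan ℝ L = ⊤) :
    ∃ b : AffineBasis ι ℝ V, (∀ i, b i ∈ L) ∧ ∀ x ∈ L, ∀ j, |b.coord j x| ≤ 1 := by
  classical
  -- `|det (b₀.toMatrix v)|` is proportional to the volume of the simplex with vertices `v`.
  obtain ⟨b₁, hb₁⟩ := b₀.exists_forall_mem_of_affineSpan_eq_top hL
  obtain ⟨v, hvL, hmax⟩ := (isCompact_univ_pi fun _ => hLc).exists_isMaxOn ⟨b₁, fun i _ => hb₁ i⟩
    (continuous_abs.comp b₀.continuous_det_toMatrix).continuousOn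
  have hpos : 0 < |(b₀.toMatrix v).det| :=
    (abs_pos.2 ((Matrix.isUnit_iff_isUnit_det _).1 (b₀.isUnit_toMatrix b₁)).ne_zero).trans_le
      (hmax fun i _ => hb₁ i)
  obtain ⟨hind, htot⟩ := (b₀.isUnit_toMatrix_iff v).1
    ((Matrix.isUnit_iff_isUnit_det _).2 (abs_pos.1 hpos).isUnit)
  let b : AffineBasis ι ℝ V := ⟨v, hind, htot⟩
  refine ⟨b, fun i => hvL i trivial, fun x hx j => ?_⟩
  have hupd : |(b₀.toMatrix (Function.update v j x)).det| ≤ |(b₀.toMatrix v).det| :=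
    hmax fun i _ => by
      rcases eq_or_ne i j with rfl | hij
      · simpa using hx
      · simpa [hij] using hvL i trivial
  rw [show v = b from rfl, det_toMatrix_update, abs_mul] at hupd
  exact le_of_mul_le_mul_right (hupd.trans_eq (one_mul _).symm) hpos

theorem exists_vadd_subset_convexHull_subset_smul (b₀ : AffineBasis ι ℝ V)
    (hι : 1 < Fintype.card ι) {L : Set V} (hLc : IsCompact L) (hLconv : Convex ℝ L)
    (hL : (interior L).Nonempty) {c : V} (hsym : ∀ x ∈ L, (2 : ℝ) • c - x ∈ L) :
    ∃ (b : AffineBasis ι ℝ V) (u : V), u +ᵥ L ⊆ convexHull ℝ (range b) ∧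
      convexHull ℝ (range b) ⊆ (Fintype.card ι - 1 : ℝ) • (u +ᵥ L) := by
  obtain ⟨q, hqL, hq⟩ :=
    b₀.exists_abs_coord_le_one hLc (hLconv.interior_nonempty_iff_affineSpan_eq_top.1 hL)
  set m : ℝ := Fintype.card ι - 1
  have hm : 0 < m := by simp only [m, sub_pos]; exact_mod_cast hι
  set t := (2 : ℝ) • c - ∑ i, q i
  have hsub : L ⊆ t +ᵥ m • convexHull ℝ (range q) :=
    q.subset_vadd_smul_convexHull hsym fun x hx j => (le_abs_self _).trans (hq x hx j)
  have hqhull : convexHull ℝ (range q) ⊆ L := convexHull_min (range_subset_iff.2 hqL) hLconv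
  -- when `m = 1` this is the junk value `0⁻¹ • t = 0`, which works because then `t = 0`
  set u := (m - 1)⁻¹ • t
  have hu : u + t = m • u := by
    rcases eq_or_ne m 1 with hm1 | hm1
    · have ht : t = 0 := eq_zero_of_subset_vadd hLc (hL.mono interior_subset)
        (hsub.trans (by rw [hm1, one_smul]; exact vadd_set_mono hqhull))
      simp [u, ht, hm1]
    · have : (m - 1) • u = t := smul_inv_smul₀ (sub_ne_zero.2 hm1) t
      rw [← this]
      module
  have hhull : convexHull ℝ (range ⇑(Units.mk0 m hm.ne' • (u +ᵥ q))) =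
      m • (u +ᵥ convexHull ℝ (range q)) := by
    rw [← convexHull_vadd, ← convexHull_smul, vadd_set_range, smul_set_range]
    rfl
  refine ⟨Units.mk0 m hm.ne' • (u +ᵥ q), u, ?_, ?_⟩ <;> rw [hhull]
  · rintro _ ⟨x, hx, rfl⟩
    obtain ⟨_, ⟨z, hz, rfl⟩, hxz⟩ := hsub hx
    refine ⟨u +ᵥ z, vadd_mem_vadd_set hz, ?_⟩
    rw [← hxz]
    change m • (u + z) = u + (t + m • z)
    rw [smul_add, ← hu]
    abel
  · exact smul_set_mono (vadd_set_mono hqhull)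

end FiniteDimensional

end AffineBasis

theorem bmDist_eq_zero_of_nonempty {K L : Set (E 0)} (hK : K.Nonempty) (hL : L.Nonempty) :
    bmDist K L = 0 := by
  suffices h : {r : ℝ | 0 < r ∧ ∃ (T : E 0 ≃ₗ[ℝ] E 0) (u v : E 0),
      (u +ᵥ K) ⊆ (T : E 0 →ₗ[ℝ] E 0) '' (v +ᵥ L) ∧
      (T : E 0 →ₗ[ℝ] E 0) '' (v +ᵥ L) ⊆ r • (u +ᵥ K)} = Ioi 0 by
    rw [bmDist, h, csInf_Ioi]
  ext r
  refine ⟨And.left, fun hr => ⟨hr, LinearEquiv.refl ℝ _, 0, 0, ?_⟩⟩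
  simp [hK.eq_univ, hL.eq_univ, Set.smul_set_univ₀ (ne_of_gt (mem_Ioi.1 hr)),
    Subsingleton.elim _ (0 : E 0)]

theorem stmt9_general (n : ℕ) (L S : Set (E n)) (hL : IsConvexBody L)
    (hsym : IsCentrallySymmetric L)
    (hsimplex : ∃ p : Fin (n + 1) → E n, AffineIndependent ℝ p ∧
      S = convexHull ℝ (Set.range p)) :
    bmDist L S = n := by
  obtain ⟨hLc, hLconv, hLint⟩ := hL
  obtain ⟨c, hc⟩ := hsym
  obtain ⟨p, hp, rfl⟩ := hsimplex
  rcases n.eq_zero_or_pos with rfl | hn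
  · simpa using bmDist_eq_zero_of_nonempty (hLint.mono interior_subset)
      ⟨p 0, subset_convexHull ℝ _ (mem_range_self 0)⟩
  let b : AffineBasis (Fin (n + 1)) ℝ (E n) :=
    ⟨p, hp, hp.affineSpan_eq_top_iff_card_eq_finrank_add_one.2 (by simp)⟩
  have hS : convexHull ℝ (range p) = convexHull ℝ (range b) := rfl
  refine IsLeast.csInf_eq ⟨⟨Nat.cast_pos.2 hn, ?_⟩, ?_⟩
  · obtain ⟨b', u, h1, h2⟩ := b.exists_vadd_subset_convexHull_subset_smul (by simp [hn])
      hLc hLconv hLint fun x hx => (hc x).1 hx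
    obtain ⟨T, v, rfl⟩ := b.exists_smul_vadd_eq b'
    refine ⟨T, u, v, ?_⟩
    rw [hS, b.image_vadd_convexHull]
    simpa using And.intro h1 h2
  · rintro r ⟨hr, T, u, v, h1, h2⟩
    rw [hS, b.image_vadd_convexHull] at h1 h2
    have := (T • (v +ᵥ b)).card_le_add_one_of_subset_convexHull_subset_smul
      (two_smul_sub_mem_vadd_set (fun x hx => (hc x).1 hx) u) h1 hr h2
    simp only [Fintype.card_fin, Nat.cast_add, Nat.cast_one] at this
    linarith

/-- For any symmetric convex body `L` in `ℝⁿ` and any simplex `S` in `ℝⁿ`,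
the Banach-Mazur distance satisfies `d(L, S) = n`. -/
theorem stmt9 (n : ℕ) (L S : Set (E n)) (hL : IsConvexBody L)
    (hsym : IsCentrallySymmetric L) (hS : IsConvexBody S)
    (hsimplex : ∃ p : Fin (n + 1) → E n, AffineIndependent ℝ p ∧
      S = convexHull ℝ (Set.range p)) :
    bmDist L S = n :=
  stmt9_general n L S hL hsym hsimplex
end
end

section
/- If K is a convex body in the plane and S is a triangle with K ⊆ S ⊆ -rK + v for some r > 0 and v ∈ R^2, then r ≥ 2. -/
open Pointwise

noncomputable section

/-!
Since `K ⊆ S`, the triangle satisfies `S ⊆ v - r S`, and the bound holds for every simplex with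
`n + 1` affinely independent vertices `p i`: `n ≤ r`. Each vertex is `p i = v - r y i` with
`y i = ∑ j, w i j • p j ∈ S`, so `v = p i + r y i` is a combination of the vertices with weights
`c i = e i + r w i`, of total mass `1 + r`. Affine independence makes `c i` independent of `i`, so
`1 + r = ∑ i, c k i = ∑ i, c i i = (n + 1) + r ∑ i, w i i ≥ n + 1`.
-/

open Set

section Simplex

variable {ι V : Type*} [Fintype ι] [AddCommGroup V] [Module ℝ V]

theorem exists_mem_stdSimplex_of_mem_convexHull_range {p : ι → V} {x : V}
    (hx : x ∈ convexHull ℝ (range p)) : ∃ w ∈ stdSimplex ℝ ι, ∑ i, w i • p i = x := by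
  classical
  have hrange : range p = Fintype.linearCombination ℝ p '' range fun i ↦ Pi.single i 1 := by
    rw [← range_comp]
    congr 1
    ext i
    simp
  rw [hrange, ← LinearMap.image_convexHull, convexHull_rangle_single_eq_stdSimplex] at hx
  obtain ⟨w, hw, rfl⟩ := hx
  exact ⟨w, hw, (Fintype.linearCombination_apply ℝ p w).symm⟩

theorem AffineIndependent.card_le_one_add_of_convexHull_subset_vadd_neg_smul {p : ι → V}
    (hp : AffineIndependent ℝ p) {r : ℝ} (hr : 0 ≤ r) {v : V}
    (h : convexHull ℝ (range p) ⊆ v +ᵥ (-r) • convexHull ℝ (range p)) :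
    (Fintype.card ι : ℝ) ≤ 1 + r := by
  classical
  have hvertex : ∀ i, ∃ w ∈ stdSimplex ℝ ι, p i + r • ∑ j, w j • p j = v := by
    intro i
    obtain ⟨_, ⟨y, hy, rfl⟩, hpi⟩ := h (subset_convexHull ℝ _ (mem_range_self i))
    obtain ⟨w, hw, rfl⟩ := exists_mem_stdSimplex_of_mem_convexHull_range hy
    refine ⟨w, hw, ?_⟩
    rw [← hpi]
    simp [neg_smul]
  choose w hw hwv using hvertex
  set c : ι → ι → ℝ := fun i j ↦ (Pi.single i 1 : ι → ℝ) j + r * w i j with hc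
  have hc_sum : ∀ i, ∑ j, c i j = 1 + r := fun i ↦ by
    simp [hc, Finset.sum_add_distrib, ← Finset.mul_sum, (hw i).2]
  have hc_comb : ∀ i, ∑ j, c i j • p j = v := fun i ↦ by
    simp [hc, add_smul, Finset.sum_add_distrib, mul_smul, ← Finset.smul_sum, hwv i]
  have hc_eq : ∀ i k, c i = c k := fun i k ↦ funext fun j ↦
    hp.eq_of_sum_eq_sum (by rw [hc_sum, hc_sum]) (by rw [hc_comb, hc_comb]) j (Finset.mem_univ j)
  have hc_diag : ∀ i, 1 ≤ c i i := fun i ↦ by simp [hc, mul_nonneg hr ((hw i).1 i)]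
  rcases isEmpty_or_nonempty ι with hι | ⟨⟨k⟩⟩
  · simp only [Fintype.card_eq_zero, Nat.cast_zero]
    linarith
  calc (Fintype.card ι : ℝ) = ∑ _i : ι, (1 : ℝ) := by simp
    _ ≤ ∑ i, c i i := Finset.sum_le_sum fun i _ ↦ hc_diag i
    _ = ∑ i, c k i := Finset.sum_congr rfl fun i _ ↦ by rw [hc_eq i k]
    _ = 1 + r := hc_sum k

end Simplex

theorem stmt11_general (K S : Set (E 2)) (hS : IsTriangle S)
    (r : ℝ) (hr : 0 < r) (v : E 2)
    (hKS : K ⊆ S) (hSK : S ⊆ v +ᵥ ((-r) • K)) :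
    2 ≤ r := by
  obtain ⟨p, hp, rfl⟩ := hS
  have hcard := hp.card_le_one_add_of_convexHull_subset_vadd_neg_smul hr.le
    (hSK.trans (vadd_set_mono (smul_set_mono hKS)))
  simp only [Fintype.card_fin, Nat.cast_ofNat] at hcard
  linarith

/-- If `K` is a convex body in the plane and `S` is a triangle with
`K ⊆ S ⊆ -r • K + v` for some `r > 0` and `v ∈ ℝ²`, then `r ≥ 2`. -/
theorem stmt11 (K S : Set (E 2)) (hK : IsConvexBody K) (hS : IsTriangle S)
    (r : ℝ) (hr : 0 < r) (v : E 2)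
    (hKS : K ⊆ S) (hSK : S ⊆ v +ᵥ ((-r) • K)) :
    2 ≤ r :=
  stmt11_general K S hS r hr v hKS hSK
end
end

section
/- If K is a convex body in the plane with Banach-Mazur distance to a triangle S strictly greater than 2, then the Grünbaum distance d_G(K, S) equals 2. -/
open Pointwise

noncomputable section

/-! Upper bound: take a triangle `T ⊆ K` of maximal area. Replacing a vertex of `T` by `x ∈ K`
multiplies the area by the corresponding barycentric coordinate of `x`, so these coordinates are
at most `1` on `K`; that is, `K` lies in the image of `T` under the homothety of ratio `-2` about
its centroid, and `T ⊆ K ⊆ -2 • T` after centring.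

Lower bound: a positive ratio `r` bounds the Banach–Mazur distance, so `r > 2`. A ratio `r ≤ 0`
gives a triangle with `T ⊆ r • T`, i.e. `r⁻¹ • vᵢ ∈ T` for each vertex `vᵢ`; adding up the
barycentric coordinates of these three points forces `r ≤ -2`. -/

namespace AffineBasis

variable {ι V : Type*} [AddCommGroup V] [Module ℝ V]

theorem le_one_sub_card_of_convexHull_subset_smul [Fintype ι] (b : AffineBasis ι ℝ V) {r : ℝ}
    (hr : r < 0) (h : convexHull ℝ (Set.range b) ⊆ r • convexHull ℝ (Set.range b)) :
    r ≤ 1 - Fintype.card ι := by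
  have hcoord : ∀ i, 0 ≤ r⁻¹ + (1 - r⁻¹) * b.coord i 0 := fun i => by
    obtain ⟨y, hy, hyb⟩ := Set.mem_smul_set.1 (h (subset_convexHull ℝ _ ⟨i, rfl⟩))
    rw [b.convexHull_eq_nonneg_coord] at hy
    have hline : y = AffineMap.lineMap 0 (b i) r⁻¹ := by
      rw [AffineMap.lineMap_apply_module, smul_zero, zero_add, ← hyb, inv_smul_smul₀ hr.ne]
    have hyi := hy i
    rw [hline, AffineMap.apply_lineMap, b.coord_apply_eq, AffineMap.lineMap_apply_module,
      smul_eq_mul, smul_eq_mul, mul_one] at hyi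
    linarith
  have hsum := Finset.sum_nonneg fun i (_ : i ∈ Finset.univ) => hcoord i
  rw [Finset.sum_add_distrib, ← Finset.mul_sum, b.sum_coord_apply_eq_one, Finset.sum_const,
    Finset.card_univ, nsmul_eq_mul, mul_one] at hsum
  have hmul : r * (Fintype.card ι * r⁻¹ + (1 - r⁻¹)) = Fintype.card ι + r - 1 := by
    linear_combination (Fintype.card ι - 1 : ℝ) * mul_inv_cancel₀ hr.ne
  linarith [mul_nonpos_of_nonneg_of_nonpos hsum hr.le]

theorem exists_affineEquiv_apply_eq (b c : AffineBasis ι ℝ V) :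
    ∃ e : V ≃ᵃ[ℝ] V, ∀ i, e (b i) = c i := by
  obtain ⟨i₀⟩ := b.nonempty
  let L := (b.basisOf i₀).equiv (c.basisOf i₀) (Equiv.refl _)
  refine ⟨((AffineEquiv.constVAdd ℝ V (-b i₀)).trans L.toAffineEquiv).trans
    (AffineEquiv.constVAdd ℝ V (c i₀)), fun i => ?_⟩
  by_cases hi : i = i₀
  · subst hi; simp
  · have hL := (b.basisOf i₀).equiv_apply ⟨i, hi⟩ (c.basisOf i₀) (Equiv.refl _)
    simp only [basisOf_apply, vsub_eq_sub, Equiv.refl_apply] at hL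
    simp [L, neg_add_eq_sub, hL]

theorem mem_homothety_convexHull_of_coord_le_one [Fintype ι] [Nontrivial ι]
    (b : AffineBasis ι ℝ V) {x : V} (hx : ∀ i, b.coord i x ≤ 1) :
    x ∈ AffineMap.homothety (Finset.univ.centroid ℝ b) (1 - Fintype.card ι : ℝ) ''
      convexHull ℝ (Set.range b) := by
  set m : ℝ := (Fintype.card ι : ℝ)
  have hm : 1 < m := Nat.one_lt_cast.2 Fintype.one_lt_card
  have hm1 : m - 1 ≠ 0 := by linarith
  have hg : Finset.univ.centroid ℝ b = m⁻¹ • ∑ i, b i := by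
    rw [Finset.centroid_def, Finset.affineCombination_eq_linear_combination _ _ _
      (Finset.univ.sum_centroidWeights_eq_one_of_card_ne_zero ℝ (by simp))]
    simp [Finset.smul_sum, m]
  set t := ∑ i, ((1 - b.coord i x) / (m - 1)) • b i
  have ht : t ∈ convexHull ℝ (Set.range b) := by
    refine (convex_convexHull ℝ _).sum_mem (fun i _ => div_nonneg (by linarith [hx i])
      (by linarith)) ?_ (fun i _ => subset_convexHull ℝ _ ⟨i, rfl⟩)
    rw [← Finset.sum_div, Finset.sum_sub_distrib, b.sum_coord_apply_eq_one]
    simp [m, div_self hm1]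
  have ht' : t = (m - 1)⁻¹ • (∑ i, b i - x) := by
    conv_rhs => rw [← b.linear_combination_coord_eq_self x]
    simp only [t, div_eq_inv_mul, mul_smul, ← Finset.smul_sum, sub_smul, one_smul,
      Finset.sum_sub_distrib]
  refine ⟨t, ht, ?_⟩
  rw [AffineMap.homothety_apply, hg, ht', vsub_eq_sub, vadd_eq_add]
  match_scalars <;> field_simp <;> ring

end AffineBasis

theorem bmDist_le_of_subset_of_subset_smul {n : ℕ} {K L : Set (E n)} {r : ℝ} (hr : 0 < r)
    (F G : E n ≃ᵃ[ℝ] E n) (hFG : F '' K ⊆ G '' L) (hGF : G '' L ⊆ r • F '' K) :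
    bmDist K L ≤ r := by
  set A := F.linear.symm
  set T := G.linear.trans A
  have hdecomp : ∀ (H : E n ≃ᵃ[ℝ] E n) x, H x = H.linear x + H 0 := fun H x =>
    congrFun (AffineMap.decomp H.toAffineMap) x
  have hK : A (F 0) +ᵥ K = A '' (F '' K) := by
    rw [Set.image_image, ← Set.image_vadd]
    refine Set.image_congr fun x _ => ?_
    simp [A, hdecomp F x, add_comm]
  have hL : (T : E n →ₗ[ℝ] E n) '' (G.linear.symm (G 0) +ᵥ L) = A '' (G '' L) := by
    rw [Set.image_image, ← Set.image_vadd, Set.image_image]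
    refine Set.image_congr fun y _ => ?_
    simp [T, hdecomp G y, add_comm]
  refine csInf_le ⟨0, fun _ hs => hs.1.le⟩ ⟨hr, T, A (F 0), G.linear.symm (G 0), ?_, ?_⟩
  · rw [hK, hL]
    exact Set.image_mono hFG
  · rw [hK, hL, ← image_smul_set]
    exact Set.image_mono hGF

theorem grDist_le_abs {n : ℕ} {K L : Set (E n)} {r : ℝ} (F G : E n ≃ᵃ[ℝ] E n)
    (hFG : F '' K ⊆ G '' L) (hGF : G '' L ⊆ r • F '' K) : grDist K L ≤ |r| :=
  csInf_le ⟨0, fun _ ⟨_, _, _, hs, _⟩ => hs ▸ abs_nonneg _⟩ ⟨r, F, G, rfl, hFG, hGF⟩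

theorem le_grDist {n : ℕ} {K L : Set (E n)} {c r : ℝ} (F G : E n ≃ᵃ[ℝ] E n)
    (hFG : F '' K ⊆ G '' L) (hGF : G '' L ⊆ r • F '' K)
    (h : ∀ (r : ℝ) (F G : E n ≃ᵃ[ℝ] E n), F '' K ⊆ G '' L → G '' L ⊆ r • F '' K → c ≤ |r|) :
    c ≤ grDist K L :=
  le_csInf ⟨_, r, F, G, rfl, hFG, hGF⟩ fun _ ⟨r, F, G, hs, hFG, hGF⟩ => hs ▸ h r F G hFG hGF

theorem AffineIndependent.exists_affineBasis_coe_eq {n : ℕ} {p : Fin (n + 1) → E n}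
    (hp : AffineIndependent ℝ p) : ∃ b : AffineBasis (Fin (n + 1)) ℝ (E n), ⇑b = p :=
  ⟨⟨p, hp, hp.affineSpan_eq_top_iff_card_eq_finrank_add_one.2 (by simp)⟩, rfl⟩

theorem IsTriangle.le_neg_two_of_subset_smul {T : Set (E 2)} (hT : IsTriangle T) {r : ℝ}
    (hr : r ≤ 0) (h : T ⊆ r • T) : r ≤ -2 := by
  obtain ⟨p, hp, rfl⟩ := hT
  obtain ⟨b, rfl⟩ := hp.exists_affineBasis_coe_eq
  rcases hr.lt_or_eq with hr | rfl
  · simpa [show (1 : ℝ) - 3 = -2 by norm_num] using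
      b.le_one_sub_card_of_convexHull_subset_smul hr h
  · have hzero : ∀ i, b i = 0 := fun i =>
      Set.zero_smul_set_subset _ (h (subset_convexHull ℝ _ ⟨i, rfl⟩))
    exact absurd (b.ind.injective ((hzero 0).trans (hzero 1).symm)) (by decide)

theorem IsTriangle.image_affineEquiv {T : Set (E 2)} (hT : IsTriangle T) (G : E 2 ≃ᵃ[ℝ] E 2) :
    IsTriangle (G '' T) := by
  obtain ⟨p, hp, rfl⟩ := hT
  refine ⟨G ∘ p, hp.map' G.toAffineMap G.injective, ?_⟩
  rw [Set.range_comp, ← G.coe_toAffineMap, AffineMap.image_convexHull]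

theorem two_le_abs_of_isTriangle {K S : Set (E 2)} (hS : IsTriangle S) (hd : 2 < bmDist K S)
    {r : ℝ} (F G : E 2 ≃ᵃ[ℝ] E 2) (hFG : F '' K ⊆ G '' S) (hGF : G '' S ⊆ r • F '' K) :
    2 ≤ |r| := by
  rcases le_or_gt r 0 with hr | hr
  · have := (hS.image_affineEquiv G).le_neg_two_of_subset_smul hr
      (hGF.trans (Set.smul_set_mono hFG))
    rw [abs_of_nonpos hr]
    linarith
  · rw [abs_of_pos hr]
    linarith [bmDist_le_of_subset_of_subset_smul hr F G hFG hGF]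

-- twice the signed area of the triangle with vertices `p 0, p 1, p 2`
def triangleDet (p : Fin 3 → E 2) : ℝ :=
  (p 1 0 - p 0 0) * (p 2 1 - p 0 1) - (p 1 1 - p 0 1) * (p 2 0 - p 0 0)

theorem continuous_triangleDet : Continuous triangleDet := by
  have h : ∀ (i : Fin 3) (j : Fin 2), Continuous fun p : Fin 3 → E 2 => p i j := fun i j =>
    (EuclideanSpace.proj j).continuous.comp (continuous_apply i)
  unfold triangleDet
  fun_prop

theorem affineIndependent_of_triangleDet_ne_zero {p : Fin 3 → E 2} (h : triangleDet p ≠ 0) :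
    AffineIndependent ℝ p := by
  rw [affineIndependent_iff_not_collinear]
  intro hcol
  obtain ⟨v, hv⟩ := (collinear_iff_of_mem (Set.mem_range_self 0)).1 hcol
  obtain ⟨s, hs⟩ := hv (p 1) ⟨1, rfl⟩
  obtain ⟨t, ht⟩ := hv (p 2) ⟨2, rfl⟩
  apply h
  simp only [triangleDet, hs, ht, vadd_eq_add, PiLp.add_apply, PiLp.smul_apply, smul_eq_mul]
  ring

theorem AffineBasis.triangleDet_update (b : AffineBasis (Fin 3) ℝ (E 2)) (i : Fin 3) (x : E 2) :
    triangleDet (Function.update b i x) = b.coord i x * triangleDet b := by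
  have hsum := b.sum_coord_apply_eq_one x
  have hx : ∀ j, x j = ∑ i, b.coord i x * b i j := fun j => by
    calc x j = (∑ i, b.coord i x • b i) j := by rw [b.linear_combination_coord_eq_self]
      _ = _ := by simp only [WithLp.ofLp_sum, Finset.sum_apply, PiLp.smul_apply, smul_eq_mul]
  simp only [Fin.sum_univ_three] at hsum hx
  have hw₀ : b.coord 0 x = 1 - b.coord 1 x - b.coord 2 x := by linarith
  fin_cases i <;>
  · simp only [triangleDet, Fin.isValue, Fin.zero_eta, Fin.mk_one, Fin.reduceFinMk, ne_eq,
      Fin.reduceEq, not_false_eq_true, Function.update_of_ne, Function.update_self, hx, hw₀]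
    ring

theorem exists_triangleDet_ne_zero {K : Set (E 2)} (hK : (interior K).Nonempty) :
    ∃ q : Fin 3 → E 2, (∀ i, q i ∈ K) ∧ triangleDet q ≠ 0 := by
  obtain ⟨x, hx⟩ := hK
  obtain ⟨ε, hε, hball⟩ := Metric.isOpen_iff.1 isOpen_interior x hx
  have hmem : ∀ j : Fin 2, x + EuclideanSpace.single j (ε / 2) ∈ K := fun j =>
    interior_subset <| hball <| by
      rw [Metric.mem_ball, dist_self_add_left, PiLp.norm_single, Real.norm_eq_abs,
        abs_of_pos (half_pos hε)]
      exact half_lt_self hε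
  refine ⟨![x, x + EuclideanSpace.single 0 (ε / 2), x + EuclideanSpace.single 1 (ε / 2)],
    fun i => ?_, ?_⟩
  · fin_cases i
    exacts [interior_subset hx, hmem 0, hmem 1]
  · simpa [triangleDet] using hε.ne'

theorem IsConvexBody.exists_affineBasis_coord_le_one {K : Set (E 2)} (hK : IsConvexBody K) :
    ∃ b : AffineBasis (Fin 3) ℝ (E 2),
      convexHull ℝ (Set.range b) ⊆ K ∧ ∀ x ∈ K, ∀ i, b.coord i x ≤ 1 := by
  obtain ⟨hKc, hKv, hKi⟩ := hK
  obtain ⟨q, hqK, hq⟩ := exists_triangleDet_ne_zero hKi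
  obtain ⟨p, hpK, hmax⟩ := (isCompact_univ_pi fun _ : Fin 3 => hKc).exists_isMaxOn
    ⟨q, fun i _ => hqK i⟩ (continuous_abs.comp continuous_triangleDet).continuousOn
  have hp : triangleDet p ≠ 0 := fun h0 => by
    have hle : |triangleDet q| ≤ |triangleDet p| := hmax fun i _ => hqK i
    rw [h0, abs_zero, abs_nonpos_iff] at hle
    exact hq hle
  obtain ⟨b, rfl⟩ := (affineIndependent_of_triangleDet_ne_zero hp).exists_affineBasis_coe_eq
  refine ⟨b, convexHull_min (Set.range_subset_iff.2 fun i => hpK i trivial) hKv,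
    fun x hx i => ?_⟩
  have hle : |b.coord i x| * |triangleDet b| ≤ 1 * |triangleDet b| := by
    rw [← abs_mul, ← b.triangleDet_update, one_mul]
    refine hmax fun j _ => ?_
    rcases eq_or_ne j i with rfl | hj
    · simpa using hx
    · simpa [hj] using hpK j trivial
  exact (le_abs_self _).trans (le_of_mul_le_mul_right hle (abs_pos.2 hp))

theorem exists_affineEquiv_image_subset_neg_two_smul {K S : Set (E 2)} (hK : IsConvexBody K)
    (hS : IsTriangle S) :
    ∃ F G : E 2 ≃ᵃ[ℝ] E 2, F '' K ⊆ G '' S ∧ G '' S ⊆ (-2 : ℝ) • F '' K := by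
  obtain ⟨b, hbK, hcoord⟩ := hK.exists_affineBasis_coord_le_one
  obtain ⟨p, hp, rfl⟩ := hS
  obtain ⟨c, rfl⟩ := hp.exists_affineBasis_coe_eq
  obtain ⟨e, he⟩ := c.exists_affineEquiv_apply_eq b
  set g := Finset.univ.centroid ℝ b
  let F := AffineEquiv.constVAdd ℝ (E 2) (-g)
  let H := (LinearEquiv.smulOfNeZero ℝ (E 2) (-2) (by norm_num)).toAffineEquiv
  have heS : e '' convexHull ℝ (Set.range c) = convexHull ℝ (Set.range b) := by
    rw [← e.coe_toAffineMap, AffineMap.image_convexHull, ← Set.range_comp]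
    exact congrArg _ (congrArg Set.range (funext he))
  have hGS : (e.trans (F.trans H)) '' convexHull ℝ (Set.range c) =
      (-2 : ℝ) • F '' convexHull ℝ (Set.range b) := by
    simp only [AffineEquiv.coe_trans, Set.image_comp, heS]
    rfl
  refine ⟨F, e.trans (F.trans H), ?_, ?_⟩
  · rintro _ ⟨x, hx, rfl⟩
    obtain ⟨t, ht, hxt⟩ := b.mem_homothety_convexHull_of_coord_le_one (hcoord x hx)
    rw [hGS]
    refine ⟨F t, ⟨t, ht, rfl⟩, ?_⟩
    rw [← hxt, AffineMap.homothety_apply]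
    simp only [F, AffineEquiv.constVAdd_apply, vsub_eq_sub, vadd_eq_add, Fintype.card_fin,
      Nat.cast_ofNat]
    module
  · rw [hGS]
    exact Set.smul_set_mono (Set.image_mono hbK)

/-- If `K` is a convex body in the plane whose Banach-Mazur distance to a
triangle `S` is strictly greater than `2`, then the Grünbaum distance
`d_G(K, S)` equals `2`. -/
theorem stmt12 (K S : Set (E 2)) (hK : IsConvexBody K) (hS : IsTriangle S)
    (hd : 2 < bmDist K S) :
    grDist K S = 2 := by
  obtain ⟨F, G, hFG, hGF⟩ := exists_affineEquiv_image_subset_neg_two_smul hK hS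
  refine le_antisymm ?_ (le_grDist F G hFG hGF fun r F G hFG hGF =>
    two_le_abs_of_isTriangle hS hd F G hFG hGF)
  simpa using grDist_le_abs F G hFG hGF
end
end
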